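/- arXiv:1910.11944 — 8 statements merged into one kernel-verified Lean document; each statement's English description precedes it below -/
import Mathlib

section
/- Let J' be a finite job set with processing times p : J' → ℝ satisfying p_j ≥ 0, resource rates c : J' → ℝ with 0 ≤ c_j ≤ C, deadlines d : J' → ℝ, capacity C > 0, and all release times zero (a feasible schedule s satisfies 0 ≤ s_j, s_j + p_j ≤ d_j, and the cumulative constraint). Let S be a nonempty subset of J' with J' \ S nonempty, and let s be a feasible cumulative schedule of J' \ S with makespan M ≥ 0. If M + Σ_{j∈S} p_j ≤ min_{j∈S} d_j, then there exists a feasible cumulative schedule of J' with makespan at most M + Σ_{j∈S} p_j (obtained by scheduling the jobs of S consecutively and contiguously beginning at time M). -/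
/-- `s` is a cumulative schedule of the job set `J` with processing times `p`,
resource consumption rates `c`, and resource capacity `C`: at every time `t`,
the total rate of resource consumption of the jobs running at `t` is at most `C`. -/
def CumulativeSchedule {ι : Type*} (J : Finset ι) (p c : ι → ℝ) (C : ℝ) (s : ι → ℝ) : Prop :=
  ∀ t : ℝ, ∑ j ∈ J.filter (fun j => s j ≤ t ∧ t < s j + p j), c j ≤ C

/-- A feasible schedule when all release times are zero: every scheduled job starts
at time `≥ 0`, finishes by its deadline, and the cumulative constraint holds. -/
def FeasibleZeroRelease {ι : Type*} (J : Finset ι) (p c d : ι → ℝ) (C : ℝ) (s : ι → ℝ) : Prop :=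
  (∀ j ∈ J, 0 ≤ s j ∧ s j + p j ≤ d j) ∧ CumulativeSchedule J p c C s

/-- Constructive step (case a) of Lemma 1: if `s` is a feasible schedule of `J' \ S`
with makespan `M ≥ 0` and `M + ∑_{j∈S} p j ≤ min_{j∈S} d j`, then there is a feasible
schedule of all of `J'` with makespan at most `M + ∑_{j∈S} p j`. -/
theorem stmt_1 {ι : Type*} [DecidableEq ι] (J' S : Finset ι) (p c d : ι → ℝ) (C : ℝ)
    (hC : 0 < C)
    (hp : ∀ j ∈ J', 0 ≤ p j)
    (hc : ∀ j ∈ J', 0 ≤ c j ∧ c j ≤ C)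
    (hS : S.Nonempty) (hSsub : S ⊆ J')
    (hne : (J' \ S).Nonempty)
    (s : ι → ℝ) (hfeas : FeasibleZeroRelease (J' \ S) p c d C s)
    (M : ℝ) (hM : M = (J' \ S).sup' hne (fun j => s j + p j)) (hM0 : 0 ≤ M)
    (hcase : M + ∑ j ∈ S, p j ≤ S.inf' hS d) :
    ∃ s' : ι → ℝ, FeasibleZeroRelease J' p c d C s' ∧
      J'.sup' (hS.mono hSsub) (fun j => s' j + p j) ≤ M + ∑ j ∈ S, p j := by

  classical
  letI : LinearOrder ι := linearOrderOfSTO WellOrderingRel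
  set q := ∑ j ∈ S, p j with hq
  have hq0 : 0 ≤ q := Finset.sum_nonneg fun j hj => hp j (hSsub hj)
  set s' : ι → ℝ := fun j => if j ∈ S then M + ∑ k ∈ S.filter (fun k => k < j), p k else s j
    with hs'
  have hge : ∀ j ∈ S, M ≤ s' j := by
    intro j hj
    simp only [hs', if_pos hj]
    have : 0 ≤ ∑ k ∈ S.filter (fun k => k < j), p k :=
      Finset.sum_nonneg fun k hk => hp k (hSsub (Finset.mem_filter.mp hk).1)
    linarith
  have hub : ∀ j ∈ S, s' j + p j ≤ M + q := by
    intro j hj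
    simp only [hs', if_pos hj]
    have hjnot : j ∉ S.filter (fun l => l < j) := by simp
    have hins : ∑ l ∈ S.filter (fun l => l < j), p l + p j
        = ∑ l ∈ insert j (S.filter (fun l => l < j)), p l := by
      rw [Finset.sum_insert hjnot]; ring
    have hsub : insert j (S.filter (fun l => l < j)) ⊆ S := by
      intro l hl
      rcases Finset.mem_insert.mp hl with rfl | hl
      · exact hj
      · exact (Finset.mem_filter.mp hl).1
    have := Finset.sum_le_sum_of_subset_of_nonneg hsub
      (fun l hl _ => hp l (hSsub hl))
    linarith
  have hmono : ∀ j ∈ S, ∀ k ∈ S, j < k → s' j + p j ≤ s' k := by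
    intro j hj k hk hjk
    simp only [hs', if_pos hj, if_pos hk]
    have hjnot : j ∉ S.filter (fun l => l < j) := by simp
    have hins : ∑ l ∈ S.filter (fun l => l < j), p l + p j
        = ∑ l ∈ insert j (S.filter (fun l => l < j)), p l := by
      rw [Finset.sum_insert hjnot]; ring
    have hsub : insert j (S.filter (fun l => l < j)) ⊆ S.filter (fun l => l < k) := by
      intro l hl
      rcases Finset.mem_insert.mp hl with rfl | hl
      · exact Finset.mem_filter.mpr ⟨hj, hjk⟩
      · obtain ⟨h1, h2⟩ := Finset.mem_filter.mp hl
        exact Finset.mem_filter.mpr ⟨h1, h2.trans hjk⟩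
    have := Finset.sum_le_sum_of_subset_of_nonneg hsub
      (fun l hl _ => hp l (hSsub (Finset.mem_filter.mp hl).1))
    linarith
  have hold : ∀ j ∈ J' \ S, s' j = s j := by
    intro j hj
    simp only [hs', if_neg (Finset.mem_sdiff.mp hj).2]
  have holdM : ∀ j ∈ J' \ S, s j + p j ≤ M := by
    intro j hj
    rw [hM]
    exact Finset.le_sup' (fun j => s j + p j) hj
  refine ⟨s', ⟨?_, ?_⟩, ?_⟩
  · intro j hj
    by_cases hjS : j ∈ S
    · refine ⟨le_trans hM0 (hge j hjS), ?_⟩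
      have := Finset.inf'_le d hjS
      have := hub j hjS
      linarith
    · have hj' : j ∈ J' \ S := Finset.mem_sdiff.mpr ⟨hj, hjS⟩
      rw [hold j hj']
      exact hfeas.1 j hj'
  · intro t
    have hunion : J' = (J' \ S) ∪ S := (Finset.sdiff_union_of_subset hSsub).symm
    have hdisj : Disjoint ((J' \ S).filter (fun j => s' j ≤ t ∧ t < s' j + p j))
        (S.filter (fun j => s' j ≤ t ∧ t < s' j + p j)) :=
      Finset.disjoint_filter_filter (Finset.sdiff_disjoint)
    have hfsplit : J'.filter (fun j => s' j ≤ t ∧ t < s' j + p j)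
        = (J' \ S).filter (fun j => s' j ≤ t ∧ t < s' j + p j)
          ∪ S.filter (fun j => s' j ≤ t ∧ t < s' j + p j) := by
      conv_lhs => rw [hunion]
      rw [Finset.filter_union]
    rw [hfsplit, Finset.sum_union hdisj]
    by_cases ht : t < M
    · have hSemp : S.filter (fun j => s' j ≤ t ∧ t < s' j + p j) = ∅ := by
        refine Finset.filter_false_of_mem ?_
        intro j hj h
        exact absurd h.1 (not_le.mpr (lt_of_lt_of_le ht (hge j hj)))
      rw [hSemp, Finset.sum_empty, add_zero]
      have heq : (J' \ S).filter (fun j => s' j ≤ t ∧ t < s' j + p j)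
          = (J' \ S).filter (fun j => s j ≤ t ∧ t < s j + p j) := by
        apply Finset.filter_congr
        intro j hj
        rw [hold j hj]
      rw [heq]
      exact hfeas.2 t
    · push_neg at ht
      have hOemp : (J' \ S).filter (fun j => s' j ≤ t ∧ t < s' j + p j) = ∅ := by
        refine Finset.filter_false_of_mem ?_
        intro j hj h
        rw [hold j hj] at h
        exact absurd h.2 (not_lt.mpr ((holdM j hj).trans ht))
      rw [hOemp, Finset.sum_empty, zero_add]
      by_cases hE : (S.filter (fun j => s' j ≤ t ∧ t < s' j + p j)).Nonempty
      · obtain ⟨j, hj⟩ := hE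
        have hsingle : S.filter (fun j => s' j ≤ t ∧ t < s' j + p j) = {j} := by
          apply Finset.eq_singleton_iff_unique_mem.mpr
          refine ⟨hj, ?_⟩
          intro k hk
          obtain ⟨hkS, hk1, hk2⟩ := Finset.mem_filter.mp hk
          obtain ⟨hjS, hj1, hj2⟩ := Finset.mem_filter.mp hj
          by_contra hne'
          rcases lt_or_gt_of_ne hne' with h | h
          · have := hmono k hkS j hjS h
            linarith
          · have := hmono j hjS k hkS h
            linarith
        rw [hsingle, Finset.sum_singleton]
        exact (hc j (hSsub (Finset.mem_filter.mp hj).1)).2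
      · rw [Finset.not_nonempty_iff_eq_empty.mp hE, Finset.sum_empty]
        exact le_of_lt hC
  · apply Finset.sup'_le
    intro j hj
    by_cases hjS : j ∈ S
    · exact hub j hjS
    · have hj' : j ∈ J' \ S := Finset.mem_sdiff.mpr ⟨hj, hjS⟩
      rw [hold j hj']
      have := holdM j hj'
      linarith
end

section
/- Let J be a finite job set with release times r : J → ℝ, deadlines d : J → ℝ, energies e : J → ℝ with e_j ≥ 0 (where e_j = p_j c_j), and capacity C > 0. For real numbers t₁ ≤ t₂ define J(t₁,t₂) = {j ∈ J : t₁ ≤ r_j and d_j ≤ t₂} and the tightness θ(t₁,t₂) = (1/C) Σ_{j∈J(t₁,t₂)} e_j − t₂ + t₁. Suppose u₁ ≤ t₁ ≤ t₂ ≤ u₂ and θ(t₁,t₂) ≥ θ(u₁,u₂). Then for every x : J → ℝ with 0 ≤ x_j ≤ 1 for all j, if Σ_{j∈J(t₁,t₂)} e_j x_j ≤ C(t₂ − t₁) then Σ_{j∈J(u₁,u₂)} e_j x_j ≤ C(u₂ − u₁). That is, the time-window inequality R[t₁,t₂] dominates R[u₁,u₂]. -/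
/-- Lemma 2: the time-window inequality `R[t₁,t₂]` dominates `R[u₁,u₂]` whenever
`[t₁,t₂] ⊆ [u₁,u₂]` and the tightness `θ(t₁,t₂)` is at least `θ(u₁,u₂)`.  Here
`J(t₁,t₂)` is the set of jobs whose time windows lie inside `[t₁,t₂]`, and
`θ(t₁,t₂) = (1/C) ∑_{j∈J(t₁,t₂)} e j - t₂ + t₁`. -/
theorem stmt_2 {ι : Type*} (J : Finset ι) (r d e : ι → ℝ) (C : ℝ)
    (hC : 0 < C)
    (he : ∀ j ∈ J, 0 ≤ e j)
    (t₁ t₂ u₁ u₂ : ℝ) (h₁ : u₁ ≤ t₁) (h₂ : t₁ ≤ t₂) (h₃ : t₂ ≤ u₂)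
    (hθ : (1 / C) * ∑ j ∈ J.filter (fun j => u₁ ≤ r j ∧ d j ≤ u₂), e j - u₂ + u₁ ≤
          (1 / C) * ∑ j ∈ J.filter (fun j => t₁ ≤ r j ∧ d j ≤ t₂), e j - t₂ + t₁) :
    ∀ x : ι → ℝ, (∀ j ∈ J, 0 ≤ x j ∧ x j ≤ 1) →
      (∑ j ∈ J.filter (fun j => t₁ ≤ r j ∧ d j ≤ t₂), e j * x j ≤ C * (t₂ - t₁)) →
      ∑ j ∈ J.filter (fun j => u₁ ≤ r j ∧ d j ≤ u₂), e j * x j ≤ C * (u₂ - u₁) := by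
  classical
  intro x hx hR
  set T := J.filter (fun j => t₁ ≤ r j ∧ d j ≤ t₂) with hT
  set U := J.filter (fun j => u₁ ≤ r j ∧ d j ≤ u₂) with hU
  have hsub : T ⊆ U := by
    intro j hj
    simp only [hT, hU, Finset.mem_filter] at *
    exact ⟨hj.1, h₁.trans hj.2.1, hj.2.2.trans h₃⟩
  have hsplit : ∑ j ∈ U, e j * x j = ∑ j ∈ T, e j * x j + ∑ j ∈ U \ T, e j * x j := by
    rw [add_comm, Finset.sum_sdiff hsub]
  have hdiff : ∑ j ∈ U \ T, e j * x j ≤ ∑ j ∈ U \ T, e j := by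
    apply Finset.sum_le_sum
    intro j hj
    have hjJ : j ∈ J := (Finset.mem_filter.mp (Finset.mem_sdiff.mp hj).1).1
    have := hx j hjJ
    nlinarith [he j hjJ]
  have hsd : ∑ j ∈ U \ T, e j = ∑ j ∈ U, e j - ∑ j ∈ T, e j := by
    rw [eq_sub_iff_add_eq, Finset.sum_sdiff hsub]
  have hθ' : ∑ j ∈ U, e j - ∑ j ∈ T, e j ≤ C * (u₂ - u₁) - C * (t₂ - t₁) := by
    have h := mul_le_mul_of_nonneg_left hθ hC.le
    have hCne : C ≠ 0 := hC.ne'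
    field_simp at h
    nlinarith
  linarith [hsplit, hdiff, hsd, hR]
end

section
/- Let J = {1,…,n} be a finite job set with processing times p_j ≥ 0, resource rates c_j ≥ 0, release times r_j ≥ 0, due dates d_j ∈ ℝ, and capacity C > 0. Let s : J → ℝ be a cumulative schedule with s_j ≥ r_j for all j (so in particular s_j ≥ 0). Then for every k ∈ J, the total tardiness satisfies Σ_{j∈J} max(0, s_j + p_j − d_j) ≥ max(0, (1/C) Σ_{j : d_j ≤ d_k} p_j c_j − d_k). -/
/-!
Energy argument. Let `m` be the job among those with `d j ≤ d k` that finishes last, at time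
`T`. All these jobs run inside `[0, T)`, where the load never exceeds `C`, so integrating the
load over time gives `∑ p j * c j ≤ C * T`. Hence `(1 / C) * ∑ p j * c j - d k ≤ T - d m`,
which is the tardiness of `m` alone.
-/

open MeasureTheory Set

lemma integral_indicator_Ico_const (a b e : ℝ) (hab : a ≤ b) :
    ∫ t, (Ico a b).indicator (fun _ => e) t = (b - a) * e := by
  rw [integral_indicator_const e measurableSet_Ico, measureReal_def, Real.volume_Ico,
    ENNReal.toReal_ofReal (sub_nonneg.2 hab), smul_eq_mul]

lemma integrable_indicator_Ico_const (a b e : ℝ) :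
    Integrable ((Ico a b).indicator (fun _ => e)) :=
  (integrableOn_const measure_Ico_lt_top.ne).integrable_indicator measurableSet_Ico

namespace CumulativeSchedule

variable {ι : Type*} {J S : Finset ι} {p c s : ι → ℝ} {C : ℝ}

theorem mono (hSJ : S ⊆ J) (hc : ∀ j ∈ J, 0 ≤ c j) (h : CumulativeSchedule J p c C s) :
    CumulativeSchedule S p c C s := fun t =>
  (Finset.sum_le_sum_of_subset_of_nonneg (Finset.filter_subset_filter _ hSJ)
    fun j hj _ => hc j (Finset.mem_filter.1 hj).1).trans (h t)

lemma sum_indicator_Ico_eq_sum_filter (t : ℝ) :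
    ∑ j ∈ S, (Ico (s j) (s j + p j)).indicator (fun _ => c j) t =
      ∑ j ∈ S.filter (fun j => s j ≤ t ∧ t < s j + p j), c j := by
  rw [Finset.sum_filter]
  exact Finset.sum_congr rfl fun j _ => indicator_apply _ _ _

theorem sum_mul_le (h : CumulativeSchedule S p c C s) {L T : ℝ} (hLT : L ≤ T)
    (hp : ∀ j ∈ S, 0 ≤ p j) (hL : ∀ j ∈ S, L ≤ s j) (hT : ∀ j ∈ S, s j + p j ≤ T) :
    ∑ j ∈ S, p j * c j ≤ C * (T - L) := by
  set load : ℝ → ℝ := fun t => ∑ j ∈ S, (Ico (s j) (s j + p j)).indicator (fun _ => c j) t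
  have hload_le : ∀ t, load t ≤ (Ico L T).indicator (fun _ => C) t := by
    intro t
    by_cases ht : t ∈ Ico L T
    · rw [indicator_of_mem ht]
      exact (sum_indicator_Ico_eq_sum_filter t).trans_le (h t)
    · rw [indicator_of_notMem ht]
      refine (Finset.sum_eq_zero fun j hj => indicator_of_notMem (fun hjt => ht ?_) _).le
      exact ⟨(hL j hj).trans hjt.1, hjt.2.trans_le (hT j hj)⟩
  have hload_integral : ∫ t, load t = ∑ j ∈ S, p j * c j := by
    rw [integral_finsetSum _ fun j _ => integrable_indicator_Ico_const _ _ _]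
    refine Finset.sum_congr rfl fun j hj => ?_
    rw [integral_indicator_Ico_const _ _ _ (le_add_of_nonneg_right (hp j hj)), add_sub_cancel_left]
  calc ∑ j ∈ S, p j * c j = ∫ t, load t := hload_integral.symm
    _ ≤ ∫ t, (Ico L T).indicator (fun _ => C) t :=
      integral_mono (integrable_finsetSum _ fun j _ => integrable_indicator_Ico_const _ _ _)
        (integrable_indicator_Ico_const _ _ _) hload_le
    _ = C * (T - L) := by rw [integral_indicator_Ico_const _ _ _ hLT, mul_comm]

end CumulativeSchedule

/-- Lemma 3: for any cumulative schedule respecting the release times, the total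
tardiness is bounded below by `max(0, (1/C) ∑_{j : d j ≤ d k} p j * c j - d k)`
for every job `k`. -/
theorem stmt_3 {ι : Type*} (J : Finset ι) (p c r d : ι → ℝ) (C : ℝ)
    (hC : 0 < C)
    (hp : ∀ j ∈ J, 0 ≤ p j)
    (hc : ∀ j ∈ J, 0 ≤ c j)
    (hr : ∀ j ∈ J, 0 ≤ r j)
    (s : ι → ℝ)
    (hcum : CumulativeSchedule J p c C s)
    (hs : ∀ j ∈ J, r j ≤ s j) :
    ∀ k ∈ J,
      max 0 ((1 / C) * ∑ j ∈ J.filter (fun j => d j ≤ d k), p j * c j - d k) ≤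
        ∑ j ∈ J, max 0 (s j + p j - d j) := by
  intro k hk
  set S := J.filter (fun j => d j ≤ d k)
  have hSJ : S ⊆ J := Finset.filter_subset _ _
  obtain ⟨m, hmS, hm_last⟩ := S.exists_max_image (fun j => s j + p j)
    ⟨k, Finset.mem_filter.2 ⟨hk, le_rfl⟩⟩
  have hmJ := hSJ hmS
  have hs_nonneg : ∀ j ∈ J, 0 ≤ s j := fun j hj => (hr j hj).trans (hs j hj)
  have henergy : ∑ j ∈ S, p j * c j ≤ C * (s m + p m) := by
    simpa only [sub_zero] using (hcum.mono hSJ hc).sum_mul_le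
      (add_nonneg (hs_nonneg m hmJ) (hp m hmJ)) (fun j hj => hp j (hSJ hj))
      (fun j hj => hs_nonneg j (hSJ hj)) hm_last
  have hbound : (1 / C) * ∑ j ∈ S, p j * c j ≤ s m + p m := by
    rw [one_div_mul_eq_div, div_le_iff₀ hC]
    linarith
  have hdm : d m ≤ d k := (Finset.mem_filter.1 hmS).2
  have htardy_m : s m + p m - d m ≤ ∑ j ∈ J, max 0 (s j + p j - d j) :=
    (le_max_right _ _).trans
      (Finset.single_le_sum (f := fun j => max 0 (s j + p j - d j))
        (fun j _ => le_max_left _ _) hmJ)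
  exact max_le (Finset.sum_nonneg fun j _ => le_max_left _ _) (by linarith)
end

section
/- Let jobs 1,…,n have processing times p_j ≥ 0, resource rates c_j ≥ 0, energies e_j = p_j c_j, due dates d_1 ≤ d_2 ≤ ⋯ ≤ d_n, and let the facility have capacity C > 0. Let π be a permutation of {1,…,n} ordering the jobs by nondecreasing energy, i.e., e_{π(1)} ≤ e_{π(2)} ≤ ⋯ ≤ e_{π(n)}. Then for every cumulative schedule s with s_j ≥ 0 for all j, the total tardiness satisfies Σ_{j=1}^n max(0, s_j + p_j − d_j) ≥ Σ_{k=1}^n T̂_k, where T̂_k = max(0, (1/C) Σ_{j=1}^k e_{π(j)} − d_k). -/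
open Finset MeasureTheory

lemma max_zero_sub_add_max_zero_sub_le {a b u v : ℝ} (hab : a ≤ b) (huv : u ≤ v) :
    max 0 (a - u) + max 0 (b - v) ≤ max 0 (b - u) + max 0 (a - v) := by
  simp only [max_def]
  split_ifs <;> linarith

lemma sum_max_zero_sub_comp_swap_le {ι : Type*} [Fintype ι] [DecidableEq ι] {f d : ι → ℝ}
    {i j : ι} (hf : f j ≤ f i) (hd : d i ≤ d j) :
    ∑ k, max 0 (f (Equiv.swap i j k) - d k) ≤ ∑ k, max 0 (f k - d k) := by
  rcases eq_or_ne i j with rfl | hij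
  · simp
  have hj : j ∈ univ.erase i := mem_erase.2 ⟨hij.symm, mem_univ j⟩
  rw [← add_sum_erase _ _ (mem_univ i), ← add_sum_erase _ _ hj,
    ← add_sum_erase _ _ (mem_univ i), ← add_sum_erase _ _ hj, ← add_assoc, ← add_assoc]
  refine add_le_add ?_ (sum_le_sum fun k hk => ?_)
  · simpa only [Equiv.swap_apply_left, Equiv.swap_apply_right, add_comm (max 0 (f j - d j))]
      using max_zero_sub_add_max_zero_sub_le hf hd
  · obtain ⟨hkj, hki⟩ : k ≠ j ∧ k ≠ i := by simpa using hk
    rw [Equiv.swap_apply_of_ne_of_ne hki hkj]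

lemma sum_max_zero_sub_le_of_forall_card {n : ℕ} {A f d : Fin n → ℝ} (hd : Monotone d)
    (hA : ∀ (k : Fin n) (T : Finset (Fin n)), (k : ℕ) < #T → ∃ j ∈ T, A k ≤ f j) :
    ∑ k, max 0 (A k - d k) ≤ ∑ j, max 0 (f j - d j) := by
  induction n with
  | zero => simp
  | succ n ih =>
    obtain ⟨j₀, -, hj₀⟩ := univ.exists_max_image f univ_nonempty
    set σ := Equiv.swap j₀ (Fin.last n)
    have hA' : ∀ (k : Fin n) (T : Finset (Fin n)), (k : ℕ) < #T →
        ∃ j ∈ T, A k.castSucc ≤ f (σ j.castSucc) := by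
      intro k T hT
      obtain ⟨_, hj, hAj⟩ := hA k.castSucc (T.map (Fin.castSuccEmb.trans σ.toEmbedding))
        (by simpa using hT)
      obtain ⟨j, hjT, rfl⟩ := mem_map.1 hj
      exact ⟨j, hjT, hAj⟩
    have hlast : A (Fin.last n) ≤ f (σ (Fin.last n)) := by
      obtain ⟨j, -, hAj⟩ := hA (Fin.last n) univ (by simp)
      simpa [σ] using hAj.trans (hj₀ j (mem_univ j))
    calc ∑ k, max 0 (A k - d k)
        = ∑ k : Fin n, max 0 (A k.castSucc - d k.castSucc)
            + max 0 (A (Fin.last n) - d (Fin.last n)) := Fin.sum_univ_castSucc _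
      _ ≤ ∑ j : Fin n, max 0 (f (σ j.castSucc) - d j.castSucc)
            + max 0 (f (σ (Fin.last n)) - d (Fin.last n)) :=
        add_le_add (ih (hd.comp Fin.strictMono_castSucc.monotone) hA')
          (max_le_max le_rfl (sub_le_sub_right hlast _))
      _ = ∑ j, max 0 (f (σ j) - d j) :=
        (Fin.sum_univ_castSucc fun j => max 0 (f (σ j) - d j)).symm
      _ ≤ ∑ j, max 0 (f j - d j) :=
        sum_max_zero_sub_comp_swap_le (hj₀ _ (mem_univ _)) (hd (Fin.le_last j₀))

lemma sum_Iic_le_sum_of_lt_card {n : ℕ} {g : Fin n → ℝ} (hg : Monotone g) (hg0 : 0 ≤ g)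
    {k : Fin n} {T : Finset (Fin n)} (hT : (k : ℕ) < #T) :
    ∑ i ∈ Iic k, g i ≤ ∑ i ∈ T, g i := by
  obtain ⟨S, hST, hS⟩ := T.exists_subset_card_eq (show #(Iic k) ≤ #T by simpa using hT)
  refine le_trans ?_ (sum_le_sum_of_subset_of_nonneg hST fun i _ _ => hg0 i)
  rw [← sum_inter_add_sum_sdiff _ S, ← sum_inter_add_sum_sdiff S, inter_comm]
  refine add_le_add le_rfl ?_
  calc ∑ i ∈ Iic k \ S, g i ≤ #(Iic k \ S) • g k :=
        sum_le_card_nsmul _ _ _ fun i hi => hg (mem_Iic.1 (mem_sdiff.1 hi).1)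
    _ = #(S \ Iic k) • g k := by rw [card_sdiff_comm hS.symm]
    _ ≤ ∑ i ∈ S \ Iic k, g i :=
        card_nsmul_le_sum _ _ _ fun i hi => hg (not_le.1 (mem_Iic.not.1 (mem_sdiff.1 hi).2)).le

lemma CumulativeSchedule.sum_energy_le {ι : Type*} {J T : Finset ι} {p c : ι → ℝ} {C : ℝ}
    {s : ι → ℝ} (hsch : CumulativeSchedule J p c C s) (hp : ∀ j ∈ T, 0 ≤ p j)
    (hc : ∀ j ∈ J, 0 ≤ c j) (hTJ : T ⊆ J) {M : ℝ} (hM : 0 ≤ M)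
    (hT : ∀ j ∈ T, 0 ≤ s j ∧ s j + p j ≤ M) :
    ∑ j ∈ T, p j * c j ≤ C * M := by
  have hrun : ∀ j ∈ T, ∫ t in Set.Ico 0 M, (Set.Ico (s j) (s j + p j)).indicator (fun _ => c j) t
      = p j * c j := by
    intro j hj
    rw [setIntegral_indicator measurableSet_Ico,
      Set.inter_eq_right.2 (Set.Ico_subset_Ico (hT j hj).1 (hT j hj).2), setIntegral_const,
      Real.volume_real_Ico, add_sub_cancel_left, max_eq_left (hp j hj), smul_eq_mul]
  have hload : ∀ t, ∑ j ∈ T, (Set.Ico (s j) (s j + p j)).indicator (fun _ => c j) t ≤ C := by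
    intro t
    rw [sum_indicator_eq_sum_filter]
    refine le_trans (sum_le_sum_of_subset_of_nonneg (filter_subset_filter _ hTJ)
      fun j hj _ => hc j (mem_filter.1 hj).1) ?_
    simpa only [Set.mem_Ico] using hsch t
  have hint : ∀ j, IntegrableOn
      (fun t => (Set.Ico (s j) (s j + p j)).indicator (fun _ => c j) t) (Set.Ico 0 M) :=
    fun j => ((integrable_indicator_iff measurableSet_Ico).2
      (integrableOn_const measure_Ico_lt_top.ne)).integrableOn
  calc ∑ j ∈ T, p j * c j
      = ∫ t in Set.Ico 0 M, ∑ j ∈ T, (Set.Ico (s j) (s j + p j)).indicator (fun _ => c j) t := by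
        rw [integral_finsetSum _ fun j _ => hint j]
        exact (sum_congr rfl hrun).symm
    _ ≤ ∫ t in Set.Ico 0 M, C :=
        setIntegral_mono (integrable_finsetSum _ fun j _ => hint j)
          (integrableOn_const measure_Ico_lt_top.ne) hload
    _ = C * M := by
      rw [setIntegral_const, Real.volume_real_Ico, sub_zero, max_eq_left hM, smul_eq_mul, mul_comm]

/-- Lemma 4: if due dates are nondecreasing `d 0 ≤ ⋯ ≤ d (n-1)` and `π` is a
permutation ordering the jobs by nondecreasing energy `e j = p j * c j`, then the
total tardiness of any cumulative schedule with nonnegative start times is at least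
`∑ k, max(0, (1/C) ∑_{j ≤ k} e (π j) - d k)`. -/
theorem stmt_4 (n : ℕ) (p c d : Fin n → ℝ) (C : ℝ)
    (hC : 0 < C)
    (hp : ∀ j, 0 ≤ p j)
    (hc : ∀ j, 0 ≤ c j)
    (hd : Monotone d)
    (π : Equiv.Perm (Fin n))
    (hπ : Monotone (fun j => p (π j) * c (π j)))
    (s : Fin n → ℝ)
    (hs : ∀ j, 0 ≤ s j)
    (hcum : CumulativeSchedule Finset.univ p c C s) :
    ∑ k, max 0 ((1 / C) * ∑ j ∈ Finset.Iic k, p (π j) * c (π j) - d k) ≤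
      ∑ j, max 0 (s j + p j - d j) := by
  refine sum_max_zero_sub_le_of_forall_card hd fun k T hT => ?_
  obtain ⟨j, hjT, hj⟩ := T.exists_max_image (fun j => s j + p j) (card_pos.1 (by omega))
  refine ⟨j, hjT, ?_⟩
  rw [one_div, inv_mul_le_iff₀ hC]
  calc ∑ i ∈ Iic k, p (π i) * c (π i)
      ≤ ∑ i ∈ T.map π.symm.toEmbedding, p (π i) * c (π i) :=
        sum_Iic_le_sum_of_lt_card hπ (fun i => mul_nonneg (hp _) (hc _)) (by simpa using hT)
    _ = ∑ i ∈ T, p i * c i := by simp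
    _ ≤ C * (s j + p j) :=
        hcum.sum_energy_le (fun i _ => hp i) (fun i _ => hc i) (subset_univ T)
          (add_nonneg (hs j) (hp j)) fun i hi => ⟨hs i, hj i hi⟩
end

section
/- Abstract stopping criterion under repetition: let D be a finite nonempty set, f : D → ℝ, and B : D → D → ℝ with B(x̄, x) ≤ f(x) for all x̄, x ∈ D (validity) and B(x̄, x̄) = f(x̄) for all x̄ ∈ D (exactness). Let x¹,…,xˡ ∈ D with l ≥ 2, suppose xˡ minimizes the function x ↦ max_{1≤i≤l−1} B(xⁱ, x) over D, and suppose xˡ = xᵏ for some k < l. Then min_{x∈D} max_{1≤i≤l−1} B(xⁱ, x) = min_{1≤i≤l−1} f(xⁱ); that is, the Benders stopping criterion z = v_min holds. -/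
/-- Abstract LBBD stopping criterion under repetition: with valid and exact Benders
cuts, if the master solution `x l` of iteration `l` (which minimizes
`y ↦ max_{1≤i≤l-1} B (x i) y` over the finite domain) repeats an earlier solution
`x k` with `1 ≤ k < l`, then `min_y max_{1≤i≤l-1} B (x i) y = min_{1≤i≤l-1} f (x i)`,
i.e. the Benders stopping criterion `z = v_min` holds. -/
theorem stmt_6 {ι : Type*} [Fintype ι] [Nonempty ι]
    (f : ι → ℝ) (B : ι → ι → ℝ)
    (hvalid : ∀ xbar x : ι, B xbar x ≤ f x)
    (hexact : ∀ xbar : ι, B xbar xbar = f xbar)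
    (l : ℕ) (hl : 2 ≤ l) (x : ℕ → ι)
    (hmin : ∀ y : ι,
      (Finset.Icc 1 (l - 1)).sup' (Finset.nonempty_Icc.mpr (by omega))
          (fun i => B (x i) (x l)) ≤
        (Finset.Icc 1 (l - 1)).sup' (Finset.nonempty_Icc.mpr (by omega))
          (fun i => B (x i) y))
    (hrepeat : ∃ k, 1 ≤ k ∧ k < l ∧ x l = x k) :
    Finset.univ.inf' Finset.univ_nonempty
        (fun y => (Finset.Icc 1 (l - 1)).sup' (Finset.nonempty_Icc.mpr (by omega))
          (fun i => B (x i) y)) =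
      (Finset.Icc 1 (l - 1)).inf' (Finset.nonempty_Icc.mpr (by omega))
        (fun i => f (x i)) := by
  obtain ⟨k, hk1, hkl, hxk⟩ := hrepeat
  have hne : (Finset.Icc 1 (l-1)).Nonempty := Finset.nonempty_Icc.mpr (by omega)
  have hkmem : k ∈ Finset.Icc 1 (l-1) := Finset.mem_Icc.mpr ⟨hk1, by omega⟩
  apply le_antisymm
  · apply Finset.le_inf'
    intro j hj
    calc Finset.univ.inf' Finset.univ_nonempty
          (fun y => (Finset.Icc 1 (l - 1)).sup' hne (fun i => B (x i) y))
        ≤ (Finset.Icc 1 (l - 1)).sup' hne (fun i => B (x i) (x j)) :=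
          Finset.inf'_le _ (Finset.mem_univ _)
      _ ≤ f (x j) := Finset.sup'_le _ _ (fun i _ => hvalid _ _)
  · calc (Finset.Icc 1 (l - 1)).inf' hne (fun i => f (x i))
        ≤ f (x k) := Finset.inf'_le _ hkmem
      _ = B (x k) (x k) := (hexact _).symm
      _ ≤ (Finset.Icc 1 (l - 1)).sup' hne (fun i => B (x i) (x k)) :=
          Finset.le_sup' (fun i => B (x i) (x k)) hkmem
      _ = (Finset.Icc 1 (l - 1)).sup' hne (fun i => B (x i) (x l)) := by rw [hxk]
      _ ≤ _ := Finset.le_inf' _ _ (fun y _ => hmin y)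
end

section
/- Finite convergence of logic-based Benders decomposition (Theorem 1, abstract form): let D be a finite nonempty set, f : D → ℝ, and B : D → D → ℝ with B(x̄, x) ≤ f(x) for all x̄, x ∈ D (validity) and B(x̄, x̄) = f(x̄) for all x̄ ∈ D (exactness). Let x⁰, x¹, x², … be any sequence in D such that for every k ≥ 1, xᵏ minimizes the function x ↦ max_{0≤i<k} B(xⁱ, x) over D. Then there exists l with 1 ≤ l ≤ |D| such that min_{x∈D} max_{0≤i<l} B(xⁱ, x) = min_{0≤i<l} f(xⁱ); that is, the Benders stopping criterion is reached after at most |D| iterations. -/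
/-!
Validity alone makes every master value a lower bound on the best subproblem value found so
far. Since `D` is finite, two of `x 0, …, x |D|` coincide, say `x a = x b` with `a < b`; the cut
from iteration `a` is then exact at the master solution `x b`, so the master value of
iteration `b` is at least `f (x b) = f (x a)`, and the bounds meet.
-/

open Finset

section Cuts

variable {α ι β : Type*} [Fintype ι] [Nonempty ι] [LinearOrder β] {f : ι → β} {B : ι → ι → β}
  (x : α → ι) {s : Finset α} (hs : s.Nonempty)

include hs in
theorem inf'_sup'_le_inf'_of_valid (hvalid : ∀ xbar y, B xbar y ≤ f y) :
    univ.inf' univ_nonempty (fun y => s.sup' hs fun i => B (x i) y) ≤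
      s.inf' hs fun i => f (x i) :=
  le_inf' _ _ fun i _ =>
    (inf'_le _ (mem_univ (x i))).trans (sup'_le _ _ fun j _ => hvalid (x j) (x i))

include hs in
theorem inf'_le_inf'_sup'_of_exact_of_mem (hexact : ∀ xbar, B xbar xbar = f xbar) {z : ι}
    (hz : ∀ y, (s.sup' hs fun i => B (x i) z) ≤ s.sup' hs fun i => B (x i) y)
    {a : α} (ha : a ∈ s) (hxa : x a = z) :
    (s.inf' hs fun i => f (x i)) ≤
      univ.inf' univ_nonempty (fun y => s.sup' hs fun i => B (x i) y) :=
  le_inf' _ _ fun y _ =>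
    calc (s.inf' hs fun i => f (x i)) ≤ f (x a) := inf'_le _ ha
      _ = B (x a) z := by rw [hxa, hexact]
      _ ≤ s.sup' hs fun i => B (x i) z := le_sup' (fun i => B (x i) z) ha
      _ ≤ _ := hz y

end Cuts

theorem Fintype.exists_lt_le_card_map_eq {ι : Type*} [Fintype ι] (x : ℕ → ι) :
    ∃ a b, a < b ∧ b ≤ Fintype.card ι ∧ x a = x b := by
  obtain ⟨a, b, hab, heq⟩ :=
    Fintype.exists_ne_map_eq_of_card_lt (fun i : Fin (Fintype.card ι + 1) => x i) (by simp)
  rcases lt_or_gt_of_ne (Fin.val_ne_of_ne hab) with h | h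
  · exact ⟨a, b, h, Nat.lt_succ_iff.mp b.isLt, heq⟩
  · exact ⟨b, a, h, Nat.lt_succ_iff.mp a.isLt, heq.symm⟩

/-- Theorem 1 (abstract form): finite convergence of logic-based Benders
decomposition.  With valid and exact Benders cuts over a finite master domain, if
each master solution `x k` (for `k ≥ 1`) minimizes `y ↦ max_{0≤i<k} B (x i) y`,
then within at most `|D|` iterations the stopping criterion
`min_y max_{0≤i<l} B (x i) y = min_{0≤i<l} f (x i)` is reached. -/
theorem stmt_7 {ι : Type*} [Fintype ι] [Nonempty ι]
    (f : ι → ℝ) (B : ι → ι → ℝ)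
    (hvalid : ∀ xbar x : ι, B xbar x ≤ f x)
    (hexact : ∀ xbar : ι, B xbar xbar = f xbar)
    (x : ℕ → ι)
    (hmin : ∀ k : ℕ, ∀ _hk : 1 ≤ k, ∀ y : ι,
      (Finset.range k).sup' (Finset.nonempty_range_iff.mpr (by omega))
          (fun i => B (x i) (x k)) ≤
        (Finset.range k).sup' (Finset.nonempty_range_iff.mpr (by omega))
          (fun i => B (x i) y)) :
    ∃ l : ℕ, ∃ _hl : 1 ≤ l, l ≤ Fintype.card ι ∧
      Finset.univ.inf' Finset.univ_nonempty
          (fun y => (Finset.range l).sup' (Finset.nonempty_range_iff.mpr (by omega))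
            (fun i => B (x i) y)) =
        (Finset.range l).inf' (Finset.nonempty_range_iff.mpr (by omega))
          (fun i => f (x i)) := by
  obtain ⟨a, b, hab, hb, hxab⟩ := Fintype.exists_lt_le_card_map_eq x
  have hb₁ : 1 ≤ b := by omega
  refine ⟨b, hb₁, hb, le_antisymm (inf'_sup'_le_inf'_of_valid x _ hvalid) ?_⟩
  exact inf'_le_inf'_sup'_of_exact_of_mem x _ hexact (hmin b hb₁) (mem_range.mpr hab) hxab
end

section
/- Validity of the strengthened nogood cut for makespan: let J' be a finite nonempty job set with processing times p_j ≥ 0, resource rates c_j ≥ 0, release times r_j ≥ 0, deadlines d_j, and capacity C, and suppose every cumulative schedule of J' respecting time windows (r_j ≤ s_j and s_j + p_j ≤ d_j) has makespan at least M* ≥ 0. Let x : J' → {0,1} be an assignment, let A = { j ∈ J' : x_j = 1 }, and suppose either A is empty and M = 0, or s is a feasible cumulative schedule of A (respecting time windows) with makespan M. Then M ≥ M* (1 − Σ_{j∈J'} (1 − x_j)). -/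
/-- Validity of the strengthened nogood cut for makespan: if every feasible schedule
of `J'` (respecting time windows) has makespan at least `M* ≥ 0`, and `M` is the
makespan of a feasible schedule of the assigned jobs `A = {j ∈ J' : x j = 1}`
(with `M = 0` when `A` is empty), then `M ≥ M* (1 - ∑_{j∈J'} (1 - x j))`. -/
theorem stmt_16 {ι : Type*} (J' : Finset ι) (hJ' : J'.Nonempty)
    (p c r d : ι → ℝ) (C : ℝ)
    (hp : ∀ j ∈ J', 0 ≤ p j)
    (hc : ∀ j ∈ J', 0 ≤ c j)
    (hr : ∀ j ∈ J', 0 ≤ r j)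
    (Mstar : ℝ) (hMstar0 : 0 ≤ Mstar)
    (hlb : ∀ s : ι → ℝ, (∀ j ∈ J', r j ≤ s j ∧ s j + p j ≤ d j) →
      CumulativeSchedule J' p c C s → Mstar ≤ J'.sup' hJ' (fun j => s j + p j))
    (x : ι → ℝ) (hx : ∀ j ∈ J', x j = 0 ∨ x j = 1)
    (M : ℝ) (s : ι → ℝ)
    (hcase :
      (J'.filter (fun j => x j = 1) = ∅ ∧ M = 0) ∨
      (∃ hA : (J'.filter (fun j => x j = 1)).Nonempty,
        (∀ j ∈ J'.filter (fun j => x j = 1), r j ≤ s j ∧ s j + p j ≤ d j) ∧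
        CumulativeSchedule (J'.filter (fun j => x j = 1)) p c C s ∧
        M = (J'.filter (fun j => x j = 1)).sup' hA (fun j => s j + p j))) :
    Mstar * (1 - ∑ j ∈ J', (1 - x j)) ≤ M := by
  -- First, M ≥ 0 in all cases.
  have hM0 : 0 ≤ M := by
    rcases hcase with ⟨_, hM⟩ | ⟨hA, hw, _, hM⟩
    · exact hM.ge
    · obtain ⟨j0, hj0⟩ := hA
      have hj0' : j0 ∈ J' := (Finset.mem_filter.mp hj0).1
      have : (0 : ℝ) ≤ s j0 + p j0 :=
        add_nonneg ((hr j0 hj0').trans (hw j0 hj0).1) (hp j0 hj0')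
      exact hM ▸ this.trans (Finset.le_sup' (fun j => s j + p j) hj0)
  by_cases hall : ∀ j ∈ J', x j = 1
  · -- all assigned: filter = J', sum = 0, use hlb
    have hfeq : J'.filter (fun j => x j = 1) = J' :=
      Finset.filter_true_of_mem hall
    have hsum : ∑ j ∈ J', (1 - x j) = 0 :=
      Finset.sum_eq_zero fun j hj => by rw [hall j hj]; ring
    rw [hsum, sub_zero, mul_one]
    rcases hcase with ⟨he, _⟩ | ⟨hA, hw, hcs, hM⟩
    · rw [hfeq] at he; exact absurd he hJ'.ne_empty
    · have hw' : ∀ j ∈ J', r j ≤ s j ∧ s j + p j ≤ d j := by rw [← hfeq]; exact hw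
      have hcs' : CumulativeSchedule J' p c C s := by rw [← hfeq]; exact hcs
      have := hlb s hw' hcs'
      rw [hM]
      refine this.trans (le_of_eq ?_)
      congr 1 <;> rw [hfeq]
  · -- some job unassigned: sum ≥ 1, factor ≤ 0
    push_neg at hall
    obtain ⟨j0, hj0, hxj0⟩ := hall
    have hxj0' : x j0 = 0 := (hx j0 hj0).resolve_right hxj0
    have hsum1 : (1 : ℝ) ≤ ∑ j ∈ J', (1 - x j) := by
      have := Finset.single_le_sum (f := fun j => 1 - x j)
        (fun j hj => by rcases hx j hj with h | h <;> simp [h]) hj0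
      simp only [hxj0'] at this; linarith
    have : Mstar * (1 - ∑ j ∈ J', (1 - x j)) ≤ 0 :=
      mul_nonpos_of_nonneg_of_nonpos hMstar0 (by linarith)
    exact this.trans hM0
end

section
/- Validity of the strengthened nogood cut for total tardiness: let J' be a finite job set with processing times p_j ≥ 0, resource rates c_j ≥ 0, release times r_j, due dates d_j, and capacity C, let Q ⊆ J', and suppose every cumulative schedule of Q with s_j ≥ r_j for all j ∈ Q has total tardiness at least T* ≥ 0. Let x : J' → {0,1} be an assignment with A = { j ∈ J' : x_j = 1 }, and let s be a cumulative schedule of A with s_j ≥ r_j for all j ∈ A, with total tardiness T. Then T ≥ 0 and T ≥ T* (1 − Σ_{j∈Q} (1 − x_j)). -/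
/-- Validity of the strengthened nogood cut for total tardiness: if every cumulative
schedule of `Q ⊆ J'` respecting release times has total tardiness at least
`T* ≥ 0`, and `T` is the total tardiness of a cumulative schedule (respecting
release times) of the assigned jobs `{j ∈ J' : x j = 1}`, then `T ≥ 0` and
`T ≥ T* (1 - ∑_{j∈Q} (1 - x j))`. -/
theorem stmt_18 {ι : Type*} (J' Q : Finset ι) (p c r d : ι → ℝ) (C : ℝ)
    (hp : ∀ j ∈ J', 0 ≤ p j)
    (hc : ∀ j ∈ J', 0 ≤ c j)
    (hQ : Q ⊆ J')
    (Tstar : ℝ) (hTstar0 : 0 ≤ Tstar)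
    (hlb : ∀ s : ι → ℝ, (∀ j ∈ Q, r j ≤ s j) → CumulativeSchedule Q p c C s →
      Tstar ≤ ∑ j ∈ Q, max 0 (s j + p j - d j))
    (x : ι → ℝ) (hx : ∀ j ∈ J', x j = 0 ∨ x j = 1)
    (s : ι → ℝ)
    (hsr : ∀ j ∈ J'.filter (fun j => x j = 1), r j ≤ s j)
    (hcum : CumulativeSchedule (J'.filter (fun j => x j = 1)) p c C s)
    (T : ℝ)
    (hT : T = ∑ j ∈ J'.filter (fun j => x j = 1), max 0 (s j + p j - d j)) :
    0 ≤ T ∧ Tstar * (1 - ∑ j ∈ Q, (1 - x j)) ≤ T := by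
  have hT0 : 0 ≤ T := by
    rw [hT]; exact Finset.sum_nonneg fun j _ => le_max_left 0 _
  refine ⟨hT0, ?_⟩
  by_cases h : ∀ j ∈ Q, x j = 1
  · have hQA : Q ⊆ J'.filter (fun j => x j = 1) := fun j hj =>
      Finset.mem_filter.mpr ⟨hQ hj, h j hj⟩
    have hsum0 : ∑ j ∈ Q, (1 - x j) = 0 :=
      Finset.sum_eq_zero fun j hj => by rw [h j hj]; ring
    rw [hsum0, sub_zero, mul_one]
    have hcumQ : CumulativeSchedule Q p c C s := by
      intro t
      refine le_trans ?_ (hcum t)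
      apply Finset.sum_le_sum_of_subset_of_nonneg
      · intro a ha
        rw [Finset.mem_filter] at ha ⊢
        exact ⟨hQA ha.1, ha.2⟩
      · intro j hj _
        have hjA : j ∈ J'.filter (fun j => x j = 1) := Finset.mem_of_mem_filter j hj
        exact hc j (Finset.filter_subset _ _ hjA)
    have h1 := hlb s (fun j hj => hsr j (hQA hj)) hcumQ
    refine le_trans h1 ?_
    rw [hT]
    exact Finset.sum_le_sum_of_subset_of_nonneg hQA fun j _ _ => le_max_left 0 _
  · push_neg at h
    obtain ⟨j0, hj0Q, hj0⟩ := h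
    have hx0 : x j0 = 0 := (hx j0 (hQ hj0Q)).resolve_right hj0
    have h1le : (1 : ℝ) ≤ ∑ j ∈ Q, (1 - x j) := by
      have key := Finset.single_le_sum (f := fun j => 1 - x j)
        (fun j hj => by
          rcases hx j (hQ hj) with h | h <;> rw [h] <;> norm_num) hj0Q
      simp only [hx0, sub_zero] at key
      linarith
    have : Tstar * (1 - ∑ j ∈ Q, (1 - x j)) ≤ 0 :=
      mul_nonpos_of_nonneg_of_nonpos hTstar0 (by linarith)
    linarith
end
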